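/- Every minimal strongly connected digraph of order n ≥ 3 can be reduced to the 2-cycle C_2 by a sequence of n − 2 reductions, where a reduction is the inverse of an internal or external expansion by a single vertex, and each intermediate digraph is minimal strongly connected. -/

import Mathlib

/-- Reachability in a digraph given by its arc set `A`. -/
def Reach {α : Type*} (A : Finset (α × α)) (u v : α) : Prop :=
  Relation.ReflTransGen (fun a b => (a, b) ∈ A) u v

/-- A digraph with vertex set `V` and arc set `A` is strongly connected if
every vertex reaches every other vertex by a directed path. -/
def StrongConn {α : Type*} (V : Finset α) (A : Finset (α × α)) : Prop :=
  ∀ u ∈ V, ∀ v ∈ V, Reach A u v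

/-- Minimal strongly connected: strongly connected and removing any arc
destroys strong connectivity. -/
def MSC {α : Type*} [DecidableEq α] (V : Finset α) (A : Finset (α × α)) : Prop :=
  StrongConn V A ∧ ∀ a ∈ A, ¬ StrongConn V (A.erase a)

/-- `l` is a directed (simple) path from `u` to `v` in the digraph with arc set `A`. -/
def IsPath {α : Type*} (A : Finset (α × α)) (u v : α) (l : List α) : Prop :=
  l.Chain' (fun a b => (a, b) ∈ A) ∧ l.head? = some u ∧ l.getLast? = some v ∧ l.Nodup

/-- `(u,v)` is a transitive arc: it is an arc and there is a directed path from
`u` to `v` distinct from the single arc `(u,v)`. -/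
def TransArc {α : Type*} (A : Finset (α × α)) (u v : α) : Prop :=
  (u, v) ∈ A ∧ ∃ l, IsPath A u v l ∧ l ≠ [u, v]

/-- `l` (a list of distinct vertices, of length ≥ 2) is a directed cycle:
consecutive vertices are joined by arcs, and there is an arc from the last
vertex back to the first. -/
def IsCycle {α : Type*} (A : Finset (α × α)) (l : List α) : Prop :=
  ∃ h : l ≠ [], l.Nodup ∧ 2 ≤ l.length ∧
    List.Chain (fun a b => (a, b) ∈ A) (l.getLast h) l

/-- Well-formedness: nonempty vertex set, arcs join vertices of `V`, no loops. -/
def GoodDigraph {α : Type*} (V : Finset α) (A : Finset (α × α)) : Prop :=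
  V.Nonempty ∧ ∀ a ∈ A, a.1 ∈ V ∧ a.2 ∈ V ∧ a.1 ≠ a.2

/-- Outdegree of a vertex. -/
def outdeg {α : Type*} [DecidableEq α] (A : Finset (α × α)) (v : α) : ℕ :=
  (A.filter (fun a => a.1 = v)).card

/-- Indegree of a vertex. -/
def indeg {α : Type*} [DecidableEq α] (A : Finset (α × α)) (v : α) : ℕ :=
  (A.filter (fun a => a.2 = v)).card

/-- A linear vertex has indegree and outdegree equal to 1. -/
def LinearVertex {α : Type*} [DecidableEq α] (A : Finset (α × α)) (v : α) : Prop :=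
  indeg A v = 1 ∧ outdeg A v = 1

/-- The digraph is a directed `n`-cycle: its vertices can be listed
`v₁, …, vₙ` so that the arcs are exactly `(v₁,v₂), …, (vₙ,v₁)`. -/
def IsCycleDigraph {α : Type*} [DecidableEq α] (V : Finset α) (A : Finset (α × α)) : Prop :=
  ∃ l : List α, l.Nodup ∧ 2 ≤ l.length ∧ l.toFinset = V ∧ A = (l.zip (l.rotate 1)).toFinset

/-- A directed tree: every arc is accompanied by its reverse, and the
underlying undirected graph (on the vertex set `V`) is a tree. -/
def IsDirTree {α : Type*} [DecidableEq α] (V : Finset α) (A : Finset (α × α)) : Prop :=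
  (∀ u v : α, (u, v) ∈ A → (v, u) ∈ A) ∧
  (SimpleGraph.fromRel (fun a b : {x // x ∈ V} => ((a : α), (b : α)) ∈ A)).IsTree

/-- `(V', A')` is the (internal or external) expansion of `(V, A)` by the new
vertex `v`.  Internal: an arc `(u,w)` is replaced by `(u,v)` and `(v,w)`.
External: the arcs `(u,v)` and `(v,w)` are added for vertices `u, w ∈ V`. -/
def IsExpansionBy {α : Type*} [DecidableEq α] (v : α) (V : Finset α) (A : Finset (α × α))
    (V' : Finset α) (A' : Finset (α × α)) : Prop :=
  v ∉ V ∧ V' = insert v V ∧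
    ((∃ u w, (u, w) ∈ A ∧ A' = insert (u, v) (insert (v, w) (A.erase (u, w)))) ∨
     (∃ u ∈ V, ∃ w ∈ V, A' = insert (u, v) (insert (v, w) A)))

/-!
Let `W` be a maximal proper vertex set inducing a strongly connected subdigraph, and let
`(a₀, p)` be an arc leaving `W`. Following a walk from `p` back to `a₀` from its last visit
of `p`, we get an arc `(p, c)` and a walk from `c` to `a₀` avoiding `p`. The vertices of `W`,
`p` and those lying on walks from `c` to `a₀` avoiding `p` induce a strongly connected
subdigraph, so by maximality they are all of `V`; hence the arcs not meeting `p`, together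
with `(a₀, p)` and `(p, c)`, already connect `V` strongly, and by minimality they are all the
arcs. So `p` is linear. Deleting `p` and adding `(a₀, c)` preserves strong connectivity; if the
new arc is not needed the reduction is external, otherwise it is internal, and in both cases
minimality is inherited. Induction on the order ends at two vertices, where the only strongly
connected loopless digraph is `C₂`.
-/

section Reachability

variable {α : Type*}

theorem Relation.ReflTransGen.restrict_between {r : α → α → Prop} {a b x : α}
    (hax : Relation.ReflTransGen r a x) (hxb : Relation.ReflTransGen r x b) :
    Relation.ReflTransGen (fun y z => r y z ∧ (Relation.ReflTransGen r a y ∧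
        Relation.ReflTransGen r y b) ∧ (Relation.ReflTransGen r a z ∧
        Relation.ReflTransGen r z b)) a x ∧
      Relation.ReflTransGen (fun y z => r y z ∧ (Relation.ReflTransGen r a y ∧
        Relation.ReflTransGen r y b) ∧ (Relation.ReflTransGen r a z ∧
        Relation.ReflTransGen r z b)) x b := by
  constructor
  · induction hax with
    | refl => exact .refl
    | @tail y z hay hyz ih =>
      exact (ih (hxb.head hyz)).tail ⟨hyz, ⟨hay, hxb.head hyz⟩, hay.tail hyz, hxb⟩
  · induction hxb using Relation.ReflTransGen.head_induction_on with
    | refl => exact .refl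
    | @head y z hyz hzb ih =>
      exact (ih (hax.tail hyz)).head ⟨hyz, ⟨hax, hzb.head hyz⟩, hax.tail hyz, hzb⟩

theorem Reach.mono {A B : Finset (α × α)} (hAB : A ⊆ B) {x y : α} (h : Reach A x y) :
    Reach B x y :=
  Relation.ReflTransGen.mono (fun _ _ hab => hAB hab) _ _ h

theorem Reach.exists_arc_of_ne {A : Finset (α × α)} {x y : α} (h : Reach A x y) (hxy : x ≠ y) :
    ∃ z, (x, z) ∈ A := by
  rcases Relation.ReflTransGen.cases_head h with rfl | ⟨z, hz, -⟩
  · exact absurd rfl hxy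
  · exact ⟨z, hz⟩

theorem Reach.exists_arc_leaving {A : Finset (α × α)} {W : Finset α} {x y : α}
    (h : Reach A x y) (hx : x ∈ W) (hy : y ∉ W) : ∃ a b, (a, b) ∈ A ∧ a ∈ W ∧ b ∉ W := by
  induction h with
  | refl => exact absurd hx hy
  | @tail z y _ hzy ih =>
    by_cases hz : z ∈ W
    · exact ⟨z, y, hzy, hz, hy⟩
    · exact ih hz

theorem StrongConn.mono {V : Finset α} {A B : Finset (α × α)} (hAB : A ⊆ B)
    (h : StrongConn V A) : StrongConn V B :=
  fun x hx y hy => (h x hx y hy).mono hAB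

variable [DecidableEq α]

theorem Reach.of_insert {A : Finset (α × α)} {u w x y : α} (huw : Reach A u w)
    (h : Reach (insert (u, w) A) x y) : Reach A x y := by
  refine Relation.reflTransGen_closed (fun a b hab => ?_) _ _ h
  rcases Finset.mem_insert.1 hab with hab | hab
  · rw [Prod.mk.injEq] at hab
    rw [hab.1, hab.2]
    exact huw
  · exact .single hab

/-- The arcs of the digraph `D - v`. -/
def arcsAvoiding (A : Finset (α × α)) (v : α) : Finset (α × α) :=
  A.filter fun e => e.1 ≠ v ∧ e.2 ≠ v

theorem Reach.exists_arc_reach_avoiding {A : Finset (α × α)} {p y : α} (h : Reach A p y)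
    (hy : y ≠ p) : ∃ c, (p, c) ∈ A ∧ Reach (arcsAvoiding A p) c y := by
  induction h with
  | refl => exact absurd rfl hy
  | @tail z y _ hzy ih =>
    by_cases hz : z = p
    · exact ⟨y, hz ▸ hzy, .refl⟩
    · obtain ⟨c, hpc, hcz⟩ := ih hz
      exact ⟨c, hpc, hcz.tail (Finset.mem_filter.2 ⟨hzy, hz, hy⟩)⟩

theorem MSC.eq_of_subset {V : Finset α} {A F : Finset (α × α)} (h : MSC V A) (hFA : F ⊆ A)
    (hF : StrongConn V F) : F = A := by
  refine hFA.antisymm fun e he => ?_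
  by_contra heF
  exact h.2 e he (hF.mono fun x hx => Finset.mem_erase.2 ⟨fun hxe => heF (hxe ▸ hx), hFA hx⟩)

end Reachability

section Splice

variable {α : Type*} [DecidableEq α] {V₀ : Finset α} {B : Finset (α × α)} {u v w : α}

theorem Reach.contract (huv : u ≠ v) (hwv : w ≠ v) (hB : ∀ e ∈ B, e.1 ≠ v ∧ e.2 ≠ v)
    {x y : α} (h : Reach (insert (u, v) (insert (v, w) B)) x y) :
    Reach (insert (u, w) B) (if x = v then u else x) (if y = v then u else y) := by
  refine Relation.ReflTransGen.lift' (fun x => if x = v then u else x) (fun a b hab => ?_) x y h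
  simp only [Finset.mem_insert, Prod.mk.injEq] at hab
  show Reach _ (if a = v then u else a) (if b = v then u else b)
  rcases hab with ⟨rfl, rfl⟩ | ⟨rfl, rfl⟩ | hab
  · rw [if_neg huv, if_pos rfl]
    exact .refl
  · rw [if_pos rfl, if_neg hwv]
    exact .single (Finset.mem_insert_self _ _)
  · rw [if_neg (hB _ hab).1, if_neg (hB _ hab).2]
    exact .single (Finset.mem_insert_of_mem hab)

theorem Reach.splice {x y : α} (h : Reach (insert (u, w) B) x y) :
    Reach (insert (u, v) (insert (v, w) B)) x y := by
  refine Relation.reflTransGen_closed (fun a b hab => ?_) _ _ h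
  rcases Finset.mem_insert.1 hab with hab | hab
  · simp only [Prod.mk.injEq] at hab
    rw [hab.1, hab.2]
    exact .head (b := v) (by simp) (.single (by simp))
  · exact .single (by simp [hab])

theorem strongConn_splice_iff (hv : v ∉ V₀) (hu : u ∈ V₀) (hw : w ∈ V₀)
    (hB : ∀ e ∈ B, e.1 ≠ v ∧ e.2 ≠ v) :
    StrongConn (insert v V₀) (insert (u, v) (insert (v, w) B)) ↔
      StrongConn V₀ (insert (u, w) B) := by
  have hne : ∀ x ∈ V₀, x ≠ v := fun x hx hxv => hv (hxv ▸ hx)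
  constructor
  · intro h x hx y hy
    simpa only [if_neg (hne x hx), if_neg (hne y hy)] using
      (h x (Finset.mem_insert_of_mem hx) y (Finset.mem_insert_of_mem hy)).contract
        (hne u hu) (hne w hw) hB
  · intro h
    have hub : ∀ z ∈ insert v V₀, Reach (insert (u, v) (insert (v, w) B)) z u ∧
        Reach (insert (u, v) (insert (v, w) B)) u z := by
      intro z hz
      rcases Finset.mem_insert.1 hz with rfl | hz
      · exact ⟨.head (by simp) (h w hw u hu).splice, .single (by simp)⟩
      · exact ⟨(h z hz u hu).splice, (h u hu z hz).splice⟩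
    exact fun x hx y hy => (hub x hx).1.trans (hub y hy).2

theorem GoodDigraph.splice_mem (hg : GoodDigraph (insert v V₀) (insert (u, v) (insert (v, w) B))) :
    u ∈ V₀ ∧ w ∈ V₀ := by
  have huv := hg.2 (u, v) (by simp)
  have hvw := hg.2 (v, w) (by simp)
  simp only [Finset.mem_insert] at huv hvw
  exact ⟨huv.1.resolve_left huv.2.2, hvw.2.1.resolve_left (Ne.symm hvw.2.2)⟩

theorem GoodDigraph.of_splice (hg : GoodDigraph (insert v V₀) (insert (u, v) (insert (v, w) B)))
    (hB : ∀ e ∈ B, e.1 ≠ v ∧ e.2 ≠ v) : GoodDigraph V₀ B := by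
  refine ⟨⟨u, hg.splice_mem.1⟩, fun e he => ?_⟩
  obtain ⟨h1, h2, h12⟩ := hg.2 e (by simp [he])
  exact ⟨(Finset.mem_insert.1 h1).resolve_left (hB e he).1,
    (Finset.mem_insert.1 h2).resolve_left (hB e he).2, h12⟩

theorem MSC.not_strongConn_insert_erase (hv : v ∉ V₀) (hu : u ∈ V₀) (hw : w ∈ V₀)
    (hB : ∀ e ∈ B, e.1 ≠ v ∧ e.2 ≠ v) (h : MSC (insert v V₀) (insert (u, v) (insert (v, w) B)))
    {a : α × α} (ha : a ∈ B) : ¬ StrongConn V₀ (insert (u, w) (B.erase a)) := by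
  intro hsc
  apply h.2 a (by simp [ha])
  have hauv : (u, v) ≠ a := fun h => (hB a ha).2 (h ▸ rfl)
  have havw : (v, w) ≠ a := fun h => (hB a ha).1 (h ▸ rfl)
  rw [Finset.erase_insert_of_ne hauv, Finset.erase_insert_of_ne havw]
  exact (strongConn_splice_iff hv hu hw fun e he => hB e (Finset.mem_of_mem_erase he)).2 hsc

theorem MSC.of_splice_external (hv : v ∉ V₀) (hu : u ∈ V₀) (hw : w ∈ V₀)
    (hB : ∀ e ∈ B, e.1 ≠ v ∧ e.2 ≠ v) (h : MSC (insert v V₀) (insert (u, v) (insert (v, w) B)))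
    (hsc : StrongConn V₀ B) : MSC V₀ B :=
  ⟨hsc, fun _ ha hsc' =>
    h.not_strongConn_insert_erase hv hu hw hB ha (hsc'.mono (Finset.subset_insert _ _))⟩

theorem MSC.of_splice_internal (hv : v ∉ V₀) (hu : u ∈ V₀) (hw : w ∈ V₀)
    (hB : ∀ e ∈ B, e.1 ≠ v ∧ e.2 ≠ v) (h : MSC (insert v V₀) (insert (u, v) (insert (v, w) B)))
    (hsc : ¬ StrongConn V₀ B) : u ≠ w ∧ (u, w) ∉ B ∧ MSC V₀ (insert (u, w) B) := by
  have hsc' := (strongConn_splice_iff hv hu hw hB).1 h.1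
  have huw : u ≠ w := by
    rintro rfl
    exact hsc fun x hx y hy => Reach.of_insert .refl (hsc' x hx y hy)
  have huwB : (u, w) ∉ B := fun huwB => hsc (Finset.insert_eq_of_mem huwB ▸ hsc')
  refine ⟨huw, huwB, hsc', fun a ha hsca => ?_⟩
  by_cases hauw : a = (u, w)
  · subst hauw
    exact hsc (Finset.erase_insert huwB ▸ hsca)
  · rw [Finset.erase_insert_of_ne (Ne.symm hauw)] at hsca
    exact h.not_strongConn_insert_erase hv hu hw hB
      (Finset.mem_of_mem_insert_of_ne ha hauw) hsca

theorem exists_msc_reduction (hv : v ∉ V₀)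
    (hg : GoodDigraph (insert v V₀) (insert (u, v) (insert (v, w) B)))
    (h : MSC (insert v V₀) (insert (u, v) (insert (v, w) B)))
    (hB : ∀ e ∈ B, e.1 ≠ v ∧ e.2 ≠ v) :
    ∃ A₀, IsExpansionBy v V₀ A₀ (insert v V₀) (insert (u, v) (insert (v, w) B)) ∧
      GoodDigraph V₀ A₀ ∧ MSC V₀ A₀ := by
  obtain ⟨hu, hw⟩ := hg.splice_mem
  have hgB := hg.of_splice hB
  by_cases hsc : StrongConn V₀ B
  · exact ⟨B, ⟨hv, rfl, .inr ⟨u, hu, w, hw, rfl⟩⟩, hgB,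
      h.of_splice_external hv hu hw hB hsc⟩
  · obtain ⟨huw, huwB, hmsc⟩ := h.of_splice_internal hv hu hw hB hsc
    refine ⟨insert (u, w) B, ⟨hv, rfl, .inl ⟨u, w, Finset.mem_insert_self _ _, ?_⟩⟩,
      ⟨hgB.1, fun e he => ?_⟩, hmsc⟩
    · rw [Finset.erase_insert huwB]
    · rcases Finset.mem_insert.1 he with rfl | he
      · exact ⟨hu, hw, huw⟩
      · exact hgB.2 e he

end Splice

section LinearVertex

variable {α : Type*} [DecidableEq α] {V : Finset α} {A : Finset (α × α)}

def InducedStrongConn (A : Finset (α × α)) (W : Finset α) : Prop :=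
  StrongConn W (A.filter fun e => e.1 ∈ W ∧ e.2 ∈ W)

theorem Reach.filter_of_between {A : Finset (α × α)} {W : Finset α}
    (hA : ∀ e ∈ A, e.1 ∈ V ∧ e.2 ∈ V) {a b x : α}
    (hW : ∀ y ∈ V, Reach A a y → Reach A y b → y ∈ W) (hax : Reach A a x) (hxb : Reach A x b) :
    Reach (A.filter fun e => e.1 ∈ W ∧ e.2 ∈ W) a x ∧
      Reach (A.filter fun e => e.1 ∈ W ∧ e.2 ∈ W) x b := by
  obtain ⟨hax', hxb'⟩ := Relation.ReflTransGen.restrict_between hax hxb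
  have hsub : ∀ y z, ((y, z) ∈ A ∧ (Reach A a y ∧ Reach A y b) ∧ (Reach A a z ∧ Reach A z b)) →
      (y, z) ∈ A.filter fun e => e.1 ∈ W ∧ e.2 ∈ W := by
    rintro y z ⟨hyz, hy, hz⟩
    exact Finset.mem_filter.2 ⟨hyz, hW y (hA _ hyz).1 hy.1 hy.2, hW z (hA _ hyz).2 hz.1 hz.2⟩
  exact ⟨Relation.ReflTransGen.mono hsub _ _ hax', Relation.ReflTransGen.mono hsub _ _ hxb'⟩

theorem strongConn_filter_of_ear (hg : GoodDigraph V A) {W W' : Finset α}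
    (hW : InducedStrongConn A W) {a₀ p c : α} (ha₀ : a₀ ∈ W) (hp : p ∉ W) (ha₀p : (a₀, p) ∈ A)
    (hpc : (p, c) ∈ A) (hc : Reach (arcsAvoiding A p) c a₀)
    (hW' : ∀ x, x ∈ W' ↔ x ∈ W ∨ x = p ∨
      (x ∈ V ∧ Reach (arcsAvoiding A p) c x ∧ Reach (arcsAvoiding A p) x a₀)) :
    StrongConn W' ((insert (a₀, p) (insert (p, c) (arcsAvoiding A p))).filter
      fun e => e.1 ∈ W' ∧ e.2 ∈ W') := by
  set F := insert (a₀, p) (insert (p, c) (arcsAvoiding A p))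
  set G := F.filter fun e => e.1 ∈ W' ∧ e.2 ∈ W'
  have ha₀pG : (a₀, p) ∈ G := Finset.mem_filter.2 ⟨by simp [F], by simp [hW', ha₀]⟩
  have hpcG : (p, c) ∈ G := Finset.mem_filter.2
    ⟨by simp [F], by simp [hW'], (hW' c).2 (.inr (.inr ⟨(hg.2 _ hpc).2.1, .refl, hc⟩))⟩
  have hWG : (A.filter fun e => e.1 ∈ W ∧ e.2 ∈ W) ⊆ G := by
    intro e he
    obtain ⟨heA, he₁, he₂⟩ := Finset.mem_filter.1 he
    have hep₁ : e.1 ≠ p := fun h => hp (h ▸ he₁)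
    have hep₂ : e.2 ≠ p := fun h => hp (h ▸ he₂)
    exact Finset.mem_filter.2
      ⟨by simp [F, arcsAvoiding, heA, hep₁, hep₂], by simp [hW', he₁, he₂]⟩
  have hbetween : ∀ x, Reach (arcsAvoiding A p) c x → Reach (arcsAvoiding A p) x a₀ →
      Reach G x a₀ ∧ Reach G a₀ x := by
    intro x hcx hxa₀
    have hAG : ((arcsAvoiding A p).filter fun e => e.1 ∈ W' ∧ e.2 ∈ W') ⊆ G :=
      Finset.filter_subset_filter _ ((Finset.subset_insert _ _).trans (Finset.subset_insert _ _))
    obtain ⟨hcx', hxa₀'⟩ := Reach.filter_of_between (W := W')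
      (fun e he => (hg.2 e (Finset.mem_of_mem_filter e he)).imp_right And.left)
      (fun y hy hcy hya₀ => (hW' y).2 (.inr (.inr ⟨hy, hcy, hya₀⟩))) hcx hxa₀
    exact ⟨hxa₀'.mono hAG, .head ha₀pG (.head hpcG (hcx'.mono hAG))⟩
  have hreach : ∀ x ∈ W', Reach G x a₀ ∧ Reach G a₀ x := by
    intro x hx
    rcases (hW' x).1 hx with hx | rfl | ⟨-, hcx, hxa₀⟩
    · exact ⟨(hW x hx a₀ ha₀).mono hWG, (hW a₀ ha₀ x hx).mono hWG⟩
    · exact ⟨.head hpcG (hbetween c .refl hc).1, .single ha₀pG⟩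
    · exact hbetween x hcx hxa₀
  exact fun x hx y hy => (hreach x hx).1.trans (hreach y hy).2

theorem strongConn_of_maximal_inducedStrongConn (hg : GoodDigraph V A) {W : Finset α}
    (hWV : W ⊆ V) (hW : InducedStrongConn A W)
    (hmax : ∀ W' ⊆ V, W ⊂ W' → InducedStrongConn A W' → W' = V)
    {a₀ p c : α} (ha₀ : a₀ ∈ W) (hp : p ∉ W) (ha₀p : (a₀, p) ∈ A) (hpc : (p, c) ∈ A)
    (hc : Reach (arcsAvoiding A p) c a₀) :
    StrongConn V (insert (a₀, p) (insert (p, c) (arcsAvoiding A p))) := by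
  classical
  set W' := W ∪ insert p
    (V.filter fun x => Reach (arcsAvoiding A p) c x ∧ Reach (arcsAvoiding A p) x a₀)
  have hsc := strongConn_filter_of_ear (W' := W') hg hW ha₀ hp ha₀p hpc hc
    (fun x => by simp only [W', Finset.mem_union, Finset.mem_insert, Finset.mem_filter])
  have hpV : p ∈ V := (hg.2 _ ha₀p).2.1
  have hW'V : W' = V := by
    refine hmax W' (Finset.union_subset hWV (Finset.insert_subset hpV (Finset.filter_subset _ _)))
      ⟨Finset.subset_union_left, fun h => hp (h (by simp [W']))⟩ (hsc.mono ?_)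
    exact Finset.filter_subset_filter _
      (Finset.insert_subset ha₀p (Finset.insert_subset hpc (Finset.filter_subset _ _)))
  exact hW'V ▸ hsc.mono (Finset.filter_subset _ _)

theorem exists_linear_vertex (hg : GoodDigraph V A) (h : MSC V A) (hn : 2 ≤ V.card) :
    ∃ u v w B, (∀ e ∈ B, e.1 ≠ v ∧ e.2 ≠ v) ∧ A = insert (u, v) (insert (v, w) B) := by
  classical
  set S := V.powerset.filter fun W => W ≠ V ∧ W.Nonempty ∧ InducedStrongConn A W
  obtain ⟨x₀, hx₀⟩ := hg.1
  have hx₀S : {x₀} ∈ S := by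
    refine Finset.mem_filter.2 ⟨by simpa using hx₀, fun h => ?_, Finset.singleton_nonempty _, ?_⟩
    · simp [← h] at hn
    · intro x hx y hy
      rw [Finset.mem_singleton.1 hx, Finset.mem_singleton.1 hy]
      exact .refl
  obtain ⟨W, hWS, hWmax⟩ := S.exists_max_image Finset.card ⟨_, hx₀S⟩
  obtain ⟨hWV, hWne, ⟨a₁, ha₁⟩, hW⟩ := by simpa only [S, Finset.mem_filter, Finset.mem_powerset]
    using hWS
  have hmax : ∀ W' ⊆ V, W ⊂ W' → InducedStrongConn A W' → W' = V := by
    intro W' hW'V hWW' hW'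
    by_contra hne
    have := hWmax W' (Finset.mem_filter.2 ⟨Finset.mem_powerset.2 hW'V, hne,
      ⟨a₁, hWW'.subset ha₁⟩, hW'⟩)
    exact this.not_gt (Finset.card_lt_card hWW')
  obtain ⟨z, hzV, hzW⟩ := Finset.exists_of_ssubset (hWV.ssubset_of_ne hWne)
  obtain ⟨a₀, p, ha₀p, ha₀, hp⟩ := (h.1 a₁ (hWV ha₁) z hzV).exists_arc_leaving ha₁ hzW
  obtain ⟨c, hpc, hc⟩ := (h.1 p (hg.2 _ ha₀p).2.1 a₀ (hWV ha₀)).exists_arc_reach_avoiding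
    fun h => hp (h ▸ ha₀)
  have hF := strongConn_of_maximal_inducedStrongConn hg hWV hW hmax ha₀ hp ha₀p hpc hc
  refine ⟨a₀, p, c, arcsAvoiding A p, fun e he => (Finset.mem_filter.1 he).2, ?_⟩
  exact (h.eq_of_subset (Finset.insert_subset ha₀p
    (Finset.insert_subset hpc (Finset.filter_subset _ _))) hF).symm

end LinearVertex

section Sequence

variable {α : Type*} [DecidableEq α]

theorem StrongConn.eq_cycle_of_pair {A : Finset (α × α)} {a b : α} (hab : a ≠ b)
    (hg : GoodDigraph {a, b} A) (h : StrongConn {a, b} A) : A = {(a, b), (b, a)} := by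
  have harc : ∀ x ∈ ({a, b} : Finset α), ∀ y ∈ ({a, b} : Finset α), x ≠ y → (x, y) ∈ A := by
    intro x hx y hy hxy
    obtain ⟨z, hz⟩ := (h x hx y hy).exists_arc_of_ne hxy
    obtain ⟨-, hzV, hxz⟩ := hg.2 _ hz
    simp only [Finset.mem_insert, Finset.mem_singleton] at hx hy hzV
    have hzy : z = y := by grind
    exact hzy ▸ hz
  ext ⟨x, y⟩
  constructor
  · intro he
    obtain ⟨hx, hy, hxy⟩ := hg.2 _ he
    simp only [Finset.mem_insert, Finset.mem_singleton] at hx hy ⊢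
    grind
  · intro he
    simp only [Finset.mem_insert, Finset.mem_singleton, Prod.mk.injEq] at he
    rcases he with ⟨rfl, rfl⟩ | ⟨rfl, rfl⟩
    · exact harc _ (by simp) _ (by simp) hab
    · exact harc _ (by simp) _ (by simp) hab.symm

theorem exists_expansion_sequence (n : ℕ) :
    ∀ (V : Finset α) (A : Finset (α × α)), V.card = n + 2 → GoodDigraph V A → MSC V A →
    ∃ D : ℕ → Finset α × Finset (α × α),
      (∃ a b : α, a ≠ b ∧ (D 0).1 = {a, b} ∧ (D 0).2 = {(a, b), (b, a)}) ∧
      D n = (V, A) ∧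
      (∀ i < n, ∃ v, IsExpansionBy v (D i).1 (D i).2 (D (i + 1)).1 (D (i + 1)).2) ∧
      (∀ i ≤ n, MSC (D i).1 (D i).2) := by
  induction n with
  | zero =>
    intro V A hV hg h
    obtain ⟨a, b, hab, rfl⟩ := Finset.card_eq_two.1 hV
    exact ⟨fun _ => ({a, b}, A), ⟨a, b, hab, rfl, h.1.eq_cycle_of_pair hab hg⟩, rfl,
      fun i hi => absurd hi (Nat.not_lt_zero i), fun _ _ => h⟩
  | succ n ih =>
    intro V A hV hg h
    obtain ⟨u, v, w, B, hB, rfl⟩ := exists_linear_vertex hg h (by omega)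
    obtain ⟨V₀, hv, rfl⟩ : ∃ V₀, v ∉ V₀ ∧ V = insert v V₀ :=
      ⟨V.erase v, Finset.notMem_erase v V, (Finset.insert_erase (hg.2 (u, v) (by simp)).2.1).symm⟩
    obtain ⟨A₀, hexp, hg₀, h₀⟩ := exists_msc_reduction hv hg h hB
    obtain ⟨D, hD₀, hDn, hDexp, hDmsc⟩ :=
      ih V₀ A₀ (by rw [Finset.card_insert_of_notMem hv] at hV; omega) hg₀ h₀
    refine ⟨Function.update D (n + 1) (insert v V₀, insert (u, v) (insert (v, w) B)),
      by simpa [Function.update_apply] using hD₀, Function.update_self .., fun i hi => ?_,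
      fun i hi => ?_⟩
    · rcases Nat.lt_succ_iff_lt_or_eq.1 hi with hi | rfl
      · have hi₁ : i ≠ n + 1 := by omega
        simpa [Function.update_apply, hi₁, hi.ne] using hDexp i hi
      · exact ⟨v, by simpa [Function.update_apply, hDn] using hexp⟩
    · rcases Nat.le_succ_iff.1 hi with hi | rfl
      · simpa [Function.update_apply, (Nat.lt_succ_of_le hi).ne] using hDmsc i hi
      · simpa using h

end Sequence

/-- every MSC digraph of order `n ≥ 3` can be obtained from the
2-cycle `C₂` by a sequence of `n - 2` (internal or external) expansions, all
intermediate digraphs being MSC; equivalently, it reduces to `C₂` by `n - 2`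
reductions. -/
theorem stmt_18 {α : Type*} [DecidableEq α] (V : Finset α) (A : Finset (α × α))
    (hg : GoodDigraph V A) (h : MSC V A) (hn : 3 ≤ V.card) :
    ∃ D : ℕ → Finset α × Finset (α × α),
      (∃ a b : α, a ≠ b ∧ (D 0).1 = {a, b} ∧ (D 0).2 = {(a, b), (b, a)}) ∧
      D (V.card - 2) = (V, A) ∧
      (∀ i < V.card - 2, ∃ v, IsExpansionBy v (D i).1 (D i).2 (D (i + 1)).1 (D (i + 1)).2) ∧
      (∀ i ≤ V.card - 2, MSC (D i).1 (D i).2) :=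
  exists_expansion_sequence (V.card - 2) V A (by omega) hg h
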